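/- Let x̃, ψ̃ : [a,b] → ℝ^n be continuously differentiable and ũ : [a,b] → ℝ^m be continuous. Suppose that for every h₁ ∈ C¹([a,b];ℝ^n) with h₁(a) = h₁(b) = 0, every continuous h₂ : [a,b] → ℝ^m, and every h₃ ∈ C¹([a,b];ℝ^n), one has ∫ₐᵇ [ ⟨∇ₓH, h₁(t)⟩ + ⟨∇ᵤH, h₂(t)⟩ + ⟨∇_ψH, h₃(t)⟩ − ⟨h₃(t), x̃′(t)⟩ − ⟨ψ̃(t), h₁′(t)⟩ ] dt = 0, where the partial gradients of H are evaluated at (t, x̃(t), ũ(t), ψ̃(t)). Then the Pontryagin conditions hold for every t ∈ [a,b]: the control system x̃′(t) = ∇_ψH(t,x̃(t),ũ(t),ψ̃(t)) = φ(t,x̃(t),ũ(t)); the adjoint system ψ̃′(t) = −∇ₓH(t,x̃(t),ũ(t),ψ̃(t)); and the maximality condition ∇ᵤH(t,x̃(t),ũ(t),ψ̃(t)) = 0. -/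

import Mathlib

/-!
Taking two of the three variations to be zero isolates one condition at a time: each resulting
identity says that a function continuous on `[a,b]` is `L²`-orthogonal to every smooth vector
field supported in `(a,b)`, so it vanishes by the fundamental lemma of the calculus of variations
(vanishing a.e. on `(a,b)`, then everywhere on `[a,b]` by continuity). For the adjoint system the
term `⟪ψ̃, h₁'⟫` is first moved onto `ψ̃` by integration by parts, with no boundary terms since
`h₁(a) = h₁(b) = 0`. The control system also uses `∇_ψH = φ`, as `H` is affine in `ψ`.
-/

open MeasureTheory Set RealInnerProductSpace

noncomputable section

/-- Euclidean space `ℝ^k`. -/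
abbrev Vec (k : ℕ) : Type := EuclideanSpace ℝ (Fin k)

/-- The Hamiltonian `H(t,x,u,ψ) = -L(t,x,u) + ⟨ψ, φ(t,x,u)⟩`. -/
def Ham {n m : ℕ} (L : ℝ → Vec n → Vec m → ℝ) (φ : ℝ → Vec n → Vec m → Vec n) :
    ℝ → Vec n → Vec m → Vec n → ℝ :=
  fun t x u ψ => -L t x u + ⟪ψ, φ t x u⟫

/-- Partial derivative `∂H/∂t`. -/
def Hpt {n m : ℕ} (H : ℝ → Vec n → Vec m → Vec n → ℝ)
    (t : ℝ) (x : Vec n) (u : Vec m) (ψ : Vec n) : ℝ :=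
  deriv (fun s => H s x u ψ) t

/-- Partial gradient `∇ₓH`. -/
def Hpx {n m : ℕ} (H : ℝ → Vec n → Vec m → Vec n → ℝ)
    (t : ℝ) (x : Vec n) (u : Vec m) (ψ : Vec n) : Vec n :=
  gradient (fun y => H t y u ψ) x

/-- Partial gradient `∇ᵤH`. -/
def Hpu {n m : ℕ} (H : ℝ → Vec n → Vec m → Vec n → ℝ)
    (t : ℝ) (x : Vec n) (u : Vec m) (ψ : Vec n) : Vec m :=
  gradient (fun v => H t x v ψ) u

/-- Partial gradient `∇_ψH`. -/
def Hpψ {n m : ℕ} (H : ℝ → Vec n → Vec m → Vec n → ℝ)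
    (t : ℝ) (x : Vec n) (u : Vec m) (ψ : Vec n) : Vec n :=
  gradient (fun q => H t x u q) ψ

open InnerProductSpace
open scoped ContDiff

section FundamentalLemma

variable {E : Type*} [NormedAddCommGroup E] {a b : ℝ}

theorem eqOn_zero_of_intervalIntegral_smul_eq_zero [NormedSpace ℝ E] [CompleteSpace E]
    (hab : a < b) {g : ℝ → E} (hg : ContinuousOn g (Icc a b))
    (h : ∀ φ : ℝ → ℝ, ContDiff ℝ ∞ φ → tsupport φ ⊆ Ioo a b → ∫ t in a..b, φ t • g t = 0) :
    EqOn g 0 (Icc a b) := by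
  have hae : ∀ᵐ t, t ∈ Ioo a b → g t = 0 := by
    refine isOpen_Ioo.ae_eq_zero_of_integral_contDiff_smul_eq_zero
      ((hg.mono Ioo_subset_Icc_self).locallyIntegrableOn measurableSet_Ioo) fun φ hφ _ hsupp => ?_
    rw [← h φ hφ hsupp, intervalIntegral.integral_of_le hab.le,
      setIntegral_eq_integral_of_forall_compl_eq_zero]
    intro t ht
    rw [image_eq_zero_of_notMem_tsupport fun ht' => ht (Ioo_subset_Ioc_self (hsupp ht')),
      zero_smul]
  have hIoo : EqOn g 0 (Ioo a b) :=
    Measure.eqOn_open_of_ae_eq ((ae_restrict_iff' measurableSet_Ioo).2 hae) isOpen_Ioo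
      (hg.mono Ioo_subset_Icc_self) continuousOn_const
  exact hIoo.of_subset_closure hg continuousOn_const Ioo_subset_Icc_self
    (closure_Ioo hab.ne).superset

theorem eqOn_zero_of_intervalIntegral_inner_eq_zero [InnerProductSpace ℝ E]
    (hab : a < b) {g : ℝ → E} (hg : ContinuousOn g (Icc a b))
    (h : ∀ φ : ℝ → E, ContDiff ℝ ∞ φ → tsupport φ ⊆ Ioo a b → ∫ t in a..b, ⟪g t, φ t⟫ = 0) :
    EqOn g 0 (Icc a b) := by
  have hcoord : ∀ c : E, EqOn (fun t => ⟪g t, c⟫) 0 (Icc a b) := fun c =>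
    eqOn_zero_of_intervalIntegral_smul_eq_zero hab (hg.inner continuousOn_const)
      fun φ hφ hsupp => by
        simpa [real_inner_smul_right] using
          h (fun t => φ t • c) (hφ.smul contDiff_const)
            ((tsupport_smul_subset_left _ _).trans hsupp)
  intro t ht
  simpa using hcoord (g t) ht

end FundamentalLemma

section IntegrationByParts

variable {E : Type*} [NormedAddCommGroup E] [InnerProductSpace ℝ E] {a b : ℝ}

theorem integral_inner_derivWithin_add_inner_derivWithin (hab : a < b) {u v : ℝ → E}
    (hu : ContDiffOn ℝ 1 u (Icc a b)) (hv : ContDiffOn ℝ 1 v (Icc a b)) :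
    ∫ t in a..b, (⟪u t, derivWithin v (Icc a b) t⟫ + ⟪derivWithin u (Icc a b) t, v t⟫) =
      ⟪u b, v b⟫ - ⟪u a, v a⟫ := by
  have hderiv {w : ℝ → E} (hw : ContDiffOn ℝ 1 w (Icc a b)) {t : ℝ} (ht : t ∈ Ioo a b) :
      HasDerivAt w (derivWithin w (Icc a b) t) t := by
    have hnhds : Icc a b ∈ nhds t := Icc_mem_nhds ht.1 ht.2
    rw [derivWithin_of_mem_nhds hnhds]
    exact ((hw.differentiableOn one_ne_zero t (Ioo_subset_Icc_self ht)).differentiableAt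
      hnhds).hasDerivAt
  have hcont {w : ℝ → E} (hw : ContDiffOn ℝ 1 w (Icc a b)) :
      ContinuousOn (derivWithin w (Icc a b)) (Icc a b) :=
    hw.continuousOn_derivWithin (uniqueDiffOn_Icc hab) le_rfl
  refine intervalIntegral.integral_eq_sub_of_hasDeriv_right_of_le (f := fun t => ⟪u t, v t⟫)
    hab.le (hu.continuousOn.inner hv.continuousOn) (fun t ht => ?_) ?_
  · simpa only [add_comm] using ((hderiv hu ht).inner ℝ (hderiv hv ht)).hasDerivWithinAt
  · refine (ContinuousOn.intervalIntegrable ?_)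
    rw [uIcc_of_le hab.le]
    exact (hu.continuousOn.inner (hcont hv)).add ((hcont hu).inner hv.continuousOn)

end IntegrationByParts

section Gradient

variable {E X : Type*} [NormedAddCommGroup E] [InnerProductSpace ℝ E] [CompleteSpace E]
  [NormedAddCommGroup X] [NormedSpace ℝ X]

theorem gradient_const_add_inner_left (c : ℝ) (v p : E) : gradient (fun q => c + ⟪q, v⟫) p = v := by
  refine HasGradientAt.gradient (hasGradientAt_iff_hasFDerivAt.2 ?_)
  simpa [real_inner_comm] using ((toDual ℝ E v).hasFDerivAt (x := p)).const_add c

theorem ContDiff.continuous_partialGradient_fst {F : E × X → ℝ} (hF : ContDiff ℝ 1 F) :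
    Continuous fun p : E × X => gradient (fun y => F (y, p.2)) p.1 := by
  have hchain : ∀ p : E × X, gradient (fun y => F (y, p.2)) p.1 =
      (toDual ℝ E).symm ((fderiv ℝ F p).comp (ContinuousLinearMap.inl ℝ E X)) := fun p =>
    (hasFDerivAt_iff_hasGradientAt.1 (((hF.differentiable one_ne_zero) p).hasFDerivAt.comp
      p.1 (hasFDerivAt_prodMk_left p.1 p.2))).gradient
  simp_rw [hchain]
  exact (toDual ℝ E).symm.continuous.comp
    ((hF.continuous_fderiv one_ne_zero).clm_comp continuous_const)

end Gradient

section Variation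

variable {E F : Type*} [NormedAddCommGroup E] [InnerProductSpace ℝ E]
  [NormedAddCommGroup F] [InnerProductSpace ℝ F]

/-- The first-variation identity, with the gradients of `H` along `(x̃, ũ, ψ̃)` abstracted to
`gx`, `gu`, `gψ`. -/
def FirstVariationVanishes (a b : ℝ) (gx : ℝ → E) (gu : ℝ → F) (gψ x ψ : ℝ → E) : Prop :=
  ∀ (h₁ h₃ : ℝ → E) (h₂ : ℝ → F),
    ContDiffOn ℝ 1 h₁ (Icc a b) → ContinuousOn h₂ (Icc a b) →
    ContDiffOn ℝ 1 h₃ (Icc a b) → h₁ a = 0 → h₁ b = 0 →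
    ∫ t in a..b, (⟪gx t, h₁ t⟫ + ⟪gu t, h₂ t⟫ + ⟪gψ t, h₃ t⟫
      - ⟪h₃ t, derivWithin x (Icc a b) t⟫ - ⟪ψ t, derivWithin h₁ (Icc a b) t⟫) = 0

namespace FirstVariationVanishes

variable {a b : ℝ} {gx gψ x ψ : ℝ → E} {gu : ℝ → F}

theorem derivWithin_state_eqOn (hfv : FirstVariationVanishes a b gx gu gψ x ψ) (hab : a < b)
    (hgψ : ContinuousOn gψ (Icc a b)) (hx : ContDiffOn ℝ 1 x (Icc a b)) :
    EqOn (derivWithin x (Icc a b)) gψ (Icc a b) := by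
  refine fun t ht => (sub_eq_zero.1 ?_).symm
  refine eqOn_zero_of_intervalIntegral_inner_eq_zero hab
    (hgψ.sub (hx.continuousOn_derivWithin (uniqueDiffOn_Icc hab) le_rfl)) (fun h hh _ => ?_) ht
  simpa [inner_sub_left, real_inner_comm] using
    hfv 0 h 0 contDiffOn_const continuousOn_const (hh.of_le (by simp)).contDiffOn rfl rfl

theorem controlGradient_eqOn_zero (hfv : FirstVariationVanishes a b gx gu gψ x ψ) (hab : a < b)
    (hgu : ContinuousOn gu (Icc a b)) : EqOn gu 0 (Icc a b) :=
  eqOn_zero_of_intervalIntegral_inner_eq_zero hab hgu fun h hh _ => by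
    simpa using hfv 0 0 h contDiffOn_const hh.continuous.continuousOn contDiffOn_const rfl rfl

theorem derivWithin_costate_eqOn (hfv : FirstVariationVanishes a b gx gu gψ x ψ) (hab : a < b)
    (hgx : ContinuousOn gx (Icc a b)) (hψ : ContDiffOn ℝ 1 ψ (Icc a b)) :
    EqOn (derivWithin ψ (Icc a b)) (-gx) (Icc a b) := by
  have hψ' := hψ.continuousOn_derivWithin (uniqueDiffOn_Icc hab) le_rfl
  refine fun t ht => eq_neg_of_add_eq_zero_right ?_
  refine eqOn_zero_of_intervalIntegral_inner_eq_zero hab (hgx.add hψ') (fun h hh hsupp => ?_) ht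
  have hh1 : ContDiffOn ℝ 1 h (Icc a b) := (hh.of_le (by simp)).contDiffOn
  have hend {s} (hs : s ∉ Ioo a b) : h s = 0 := image_eq_zero_of_notMem_tsupport (hsupp.mt hs)
  have ha : h a = 0 := hend (by simp)
  have hb : h b = 0 := hend (by simp)
  have hweak : ∫ t in a..b, (⟪gx t, h t⟫ - ⟪ψ t, derivWithin h (Icc a b) t⟫) = 0 := by
    simpa using hfv h 0 0 hh1 continuousOn_const contDiffOn_const ha hb
  have hparts : ∫ t in a..b,
      (⟪ψ t, derivWithin h (Icc a b) t⟫ + ⟪derivWithin ψ (Icc a b) t, h t⟫) = 0 := by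
    simp [integral_inner_derivWithin_add_inner_derivWithin hab hψ hh1, ha, hb]
  have hh' := hh1.continuousOn_derivWithin (uniqueDiffOn_Icc hab) le_rfl
  have hint {f : ℝ → ℝ} (hf : ContinuousOn f (Icc a b)) : IntervalIntegrable f volume a b :=
    (uIcc_of_le hab.le ▸ hf).intervalIntegrable
  calc ∫ t in a..b, ⟪(gx + derivWithin ψ (Icc a b)) t, h t⟫
      = ∫ t in a..b, ((⟪gx t, h t⟫ - ⟪ψ t, derivWithin h (Icc a b) t⟫)
          + (⟪ψ t, derivWithin h (Icc a b) t⟫ + ⟪derivWithin ψ (Icc a b) t, h t⟫)) := by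
        refine intervalIntegral.integral_congr fun t _ => ?_
        simp only [Pi.add_apply, inner_add_left]
        ring
    _ = 0 := by
        rw [intervalIntegral.integral_add, hweak, hparts, add_zero]
        · exact hint ((hgx.inner hh1.continuousOn).sub (hψ.continuousOn.inner hh'))
        · exact hint ((hψ.continuousOn.inner hh').add (hψ'.inner hh1.continuousOn))

end FirstVariationVanishes

end Variation

section Hamiltonian

variable {n m : ℕ} {L : ℝ → Vec n → Vec m → ℝ} {φ : ℝ → Vec n → Vec m → Vec n}

theorem Hpψ_ham (t : ℝ) (x : Vec n) (u : Vec m) (ψ : Vec n) :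
    Hpψ (Ham L φ) t x u ψ = φ t x u :=
  gradient_const_add_inner_left _ _ _

theorem contDiff_ham (hL : ContDiff ℝ 1 (fun p : ℝ × Vec n × Vec m => L p.1 p.2.1 p.2.2))
    (hφ : ContDiff ℝ 1 (fun p : ℝ × Vec n × Vec m => φ p.1 p.2.1 p.2.2)) :
    ContDiff ℝ 1 (fun p : ℝ × Vec n × Vec m × Vec n => Ham L φ p.1 p.2.1 p.2.2.1 p.2.2.2) := by
  have hπ : ContDiff ℝ 1 (fun p : ℝ × Vec n × Vec m × Vec n => (p.1, p.2.1, p.2.2.1)) := by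
    fun_prop
  exact (hL.comp hπ).neg.add (contDiff_snd.snd.snd.inner ℝ (hφ.comp hπ))

variable {s : Set ℝ} {x ψ : ℝ → Vec n} {u : ℝ → Vec m}

theorem continuousOn_Hpx_ham
    (hL : ContDiff ℝ 1 (fun p : ℝ × Vec n × Vec m => L p.1 p.2.1 p.2.2))
    (hφ : ContDiff ℝ 1 (fun p : ℝ × Vec n × Vec m => φ p.1 p.2.1 p.2.2))
    (hx : ContinuousOn x s) (hu : ContinuousOn u s) (hψ : ContinuousOn ψ s) :
    ContinuousOn (fun t => Hpx (Ham L φ) t (x t) (u t) (ψ t)) s := by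
  have hswap : ContDiff ℝ 1
      fun p : Vec n × ℝ × Vec m × Vec n => (p.2.1, p.1, p.2.2.1, p.2.2.2) := by
    fun_prop
  have hF := (contDiff_ham hL hφ).comp hswap
  exact hF.continuous_partialGradient_fst.comp_continuousOn
    (hx.prodMk (continuousOn_id.prodMk (hu.prodMk hψ)))

theorem continuousOn_Hpu_ham
    (hL : ContDiff ℝ 1 (fun p : ℝ × Vec n × Vec m => L p.1 p.2.1 p.2.2))
    (hφ : ContDiff ℝ 1 (fun p : ℝ × Vec n × Vec m => φ p.1 p.2.1 p.2.2))
    (hx : ContinuousOn x s) (hu : ContinuousOn u s) (hψ : ContinuousOn ψ s) :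
    ContinuousOn (fun t => Hpu (Ham L φ) t (x t) (u t) (ψ t)) s := by
  have hswap : ContDiff ℝ 1
      fun p : Vec m × ℝ × Vec n × Vec n => (p.2.1, p.2.2.1, p.1, p.2.2.2) := by
    fun_prop
  have hF := (contDiff_ham hL hφ).comp hswap
  exact hF.continuous_partialGradient_fst.comp_continuousOn
    (hu.prodMk (continuousOn_id.prodMk (hx.prodMk hψ)))

theorem continuousOn_Hpψ_ham
    (hφ : ContDiff ℝ 1 (fun p : ℝ × Vec n × Vec m => φ p.1 p.2.1 p.2.2))
    (hx : ContinuousOn x s) (hu : ContinuousOn u s) :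
    ContinuousOn (fun t => Hpψ (Ham L φ) t (x t) (u t) (ψ t)) s := by
  simp_rw [Hpψ_ham]
  exact hφ.continuous.comp_continuousOn (continuousOn_id.prodMk (hx.prodMk hu))

end Hamiltonian

/-- From the first-variation identity (2.5), by suitable choices of the variations, the
Pontryagin conditions (2.6)–(2.8) follow: the control system, the adjoint system, and
the maximality condition. -/
theorem stmt_5 {n m : ℕ} {a b : ℝ} (hab : a < b)
    (L : ℝ → Vec n → Vec m → ℝ) (φ : ℝ → Vec n → Vec m → Vec n)
    (hL : ContDiff ℝ 1 (fun p : ℝ × Vec n × Vec m => L p.1 p.2.1 p.2.2))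
    (hφ : ContDiff ℝ 1 (fun p : ℝ × Vec n × Vec m => φ p.1 p.2.1 p.2.2))
    (xe ψe : ℝ → Vec n) (ue : ℝ → Vec m)
    (hxe : ContDiffOn ℝ 1 xe (Icc a b)) (hψe : ContDiffOn ℝ 1 ψe (Icc a b))
    (hue : ContinuousOn ue (Icc a b))
    -- the first-variation identity, for all admissible variations
    (hfv : ∀ (h₁ h₃ : ℝ → Vec n) (h₂ : ℝ → Vec m),
      ContDiffOn ℝ 1 h₁ (Icc a b) → ContinuousOn h₂ (Icc a b) →
      ContDiffOn ℝ 1 h₃ (Icc a b) → h₁ a = 0 → h₁ b = 0 →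
      ∫ t in a..b,
        (⟪Hpx (Ham L φ) t (xe t) (ue t) (ψe t), h₁ t⟫
          + ⟪Hpu (Ham L φ) t (xe t) (ue t) (ψe t), h₂ t⟫
          + ⟪Hpψ (Ham L φ) t (xe t) (ue t) (ψe t), h₃ t⟫
          - ⟪h₃ t, derivWithin xe (Icc a b) t⟫
          - ⟪ψe t, derivWithin h₁ (Icc a b) t⟫) = 0) :
    ∀ t ∈ Icc a b,
      -- the control system
      (derivWithin xe (Icc a b) t = Hpψ (Ham L φ) t (xe t) (ue t) (ψe t)
        ∧ Hpψ (Ham L φ) t (xe t) (ue t) (ψe t) = φ t (xe t) (ue t))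
      -- the adjoint system
      ∧ derivWithin ψe (Icc a b) t = -Hpx (Ham L φ) t (xe t) (ue t) (ψe t)
      -- the maximality condition
      ∧ Hpu (Ham L φ) t (xe t) (ue t) (ψe t) = 0 := by
  have hvar : FirstVariationVanishes a b (fun t => Hpx (Ham L φ) t (xe t) (ue t) (ψe t))
      (fun t => Hpu (Ham L φ) t (xe t) (ue t) (ψe t))
      (fun t => Hpψ (Ham L φ) t (xe t) (ue t) (ψe t)) xe ψe := hfv
  intro t ht
  exact ⟨⟨hvar.derivWithin_state_eqOn hab (continuousOn_Hpψ_ham hφ hxe.continuousOn hue) hxe ht,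
      Hpψ_ham _ _ _ _⟩,
    hvar.derivWithin_costate_eqOn hab
      (continuousOn_Hpx_ham hL hφ hxe.continuousOn hue hψe.continuousOn) hψe ht,
    hvar.controlGradient_eqOn_zero hab
      (continuousOn_Hpu_ham hL hφ hxe.continuousOn hue hψe.continuousOn) ht⟩
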